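/- arXiv:2206.00261 — 3 statements merged into one kernel-verified Lean document; each statement's English description precedes it below -/
import Mathlib

section
/- Let d ≥ 1 and consider g(z) = Σ_{j=1}^d α_j⁺ · max(z − β_j⁺, 0) + Σ_{j=1}^d α_j⁻ · max(−z + β_j⁻, 0), where β_d⁻ ≤ ⋯ ≤ β_1⁻ = 0 = β_1⁺ ≤ ⋯ ≤ β_d⁺, and for every k with 1 ≤ k ≤ d, Σ_{j=1}^k α_j⁺ > 0 and Σ_{j=1}^k α_j⁻ < 0. Then g is strictly increasing on ℝ and g(0) = 0. -/
/-!
On `[0, ∞)` only the ReLU terms `max (z - βp j) 0` can be nonzero, and on `(-∞, 0]` only the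
terms `max (-z + βm j) 0`; the second case is the mirror image `z ↦ -z` of the first, and the two
halves glue at `0`, where every term vanishes. On `[βp 0, ∞)`, for `x < y` the increments
`δ j = max (y - βp j) 0 - max (x - βp j) 0` are nonnegative, decrease in `j` and start at
`δ 0 = y - x`, so Abel summation against the partial sums of `αp`, all at least their minimum
`c > 0`, gives `g y - g x ≥ c * (y - x)`.
-/

open Finset

theorem sum_mul_max_eq_zero {R ι : Type*} [NonUnitalNonAssocSemiring R] [LinearOrder R] [Fintype ι]
    {a u : ι → R} (hu : ∀ j, u j ≤ 0) :
    ∑ j, a j * max (u j) 0 = 0 :=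
  sum_eq_zero fun j _ => by rw [max_eq_right (hu j), mul_zero]

variable {𝕜 : Type*} [Field 𝕜] [LinearOrder 𝕜] [IsStrictOrderedRing 𝕜]

theorem mul_le_sum_mul_of_le_sum_Iic {n : ℕ} {a δ : Fin (n + 1) → 𝕜} {c : 𝕜}
    (ha : ∀ k, c ≤ ∑ j ∈ Iic k, a j) (hδ : Antitone δ) (hδ_last : 0 ≤ δ (Fin.last n)) :
    c * δ 0 ≤ ∑ j, a j * δ j := by
  induction n with
  | zero =>
    have hsum : c ≤ ∑ j, a j := by simpa [← Fin.top_eq_last] using ha (Fin.last 0)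
    simpa using mul_le_mul_of_nonneg_right hsum hδ_last
  | succ n ih =>
    set δL := δ (Fin.last (n + 1))
    have hshift := ih (a := fun j => a j.castSucc) (δ := fun j => δ j.castSucc - δL)
      (fun k => by simpa only [Fin.sum_Iic_castSucc] using ha k.castSucc)
      (fun i j hij => sub_le_sub_right (hδ (Fin.castSucc_le_castSucc_iff.2 hij)) _)
      (sub_nonneg.2 (hδ (Fin.castSucc_lt_last _).le))
    have htotal : c ≤ ∑ j, a j := by simpa [← Fin.top_eq_last] using ha (Fin.last (n + 1))
    have hlast : c * δL ≤ (∑ j, a j) * δL := mul_le_mul_of_nonneg_right htotal hδ_last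
    simp only [mul_sub, sum_sub_distrib, ← sum_mul, Fin.castSucc_zero] at hshift
    rw [Fin.sum_univ_castSucc] at hlast ⊢
    linarith

theorem antitone_max_sub_sub_max_sub {x y : 𝕜} (hxy : x ≤ y) :
    Antitone fun b : 𝕜 => max (y - b) 0 - max (x - b) 0 := by
  intro b b' hb
  simp only [max_def]
  split_ifs <;> linarith

theorem strictMonoOn_sum_mul_max_sub {n : ℕ} {a b : Fin (n + 1) → 𝕜} (hb : Monotone b)
    (ha : ∀ k, 0 < ∑ j ∈ Iic k, a j) :
    StrictMonoOn (fun z => ∑ j, a j * max (z - b j) 0) (Set.Ici (b 0)) := by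
  intro x hx y _ hxy
  obtain ⟨k₀, -, hk₀⟩ := exists_min_image univ (fun k => ∑ j ∈ Iic k, a j) univ_nonempty
  have habel := mul_le_sum_mul_of_le_sum_Iic (c := ∑ j ∈ Iic k₀, a j)
    (δ := fun j => max (y - b j) 0 - max (x - b j) 0) (fun k => hk₀ k (mem_univ k))
    ((antitone_max_sub_sub_max_sub hxy.le).comp_monotone hb)
    (sub_nonneg.2 (max_le_max (by linarith) le_rfl))
  have hδ0 : max (y - b 0) 0 - max (x - b 0) 0 = y - x := by
    rw [max_eq_left (by linarith [Set.mem_Ici.1 hx]), max_eq_left (sub_nonneg.2 hx)]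
    ring
  simp only [hδ0, mul_sub, sum_sub_distrib] at habel
  have := mul_pos (ha k₀) (sub_pos.2 hxy)
  simp only
  linarith

theorem strictMonoOn_sum_mul_max_neg_add {n : ℕ} {a b : Fin (n + 1) → 𝕜} (hb : Antitone b)
    (ha : ∀ k, ∑ j ∈ Iic k, a j < 0) :
    StrictMonoOn (fun z => ∑ j, a j * max (-z + b j) 0) (Set.Iic (b 0)) := by
  intro x hx y hy hxy
  have := strictMonoOn_sum_mul_max_sub (a := -a) (b := -b) hb.neg
    (fun k => by simpa [sum_neg_distrib] using ha k)
    (show -b 0 ≤ -y from neg_le_neg hy) (show -b 0 ≤ -x from neg_le_neg hx) (neg_lt_neg hxy)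
  simp only [Pi.neg_apply, sub_neg_eq_add, neg_mul, sum_neg_distrib] at this
  simpa using this

theorem stacked_relu_strictMono_and_zero
    (d : ℕ) (hd : 1 ≤ d) (αp αm βp βm : Fin d → ℝ)
    (hβp0 : βp ⟨0, by omega⟩ = 0) (hβm0 : βm ⟨0, by omega⟩ = 0)
    (hβp : Monotone βp) (hβm : Antitone βm)
    (hαp : ∀ k : Fin d, 0 < ∑ j ∈ Finset.Iic k, αp j)
    (hαm : ∀ k : Fin d, ∑ j ∈ Finset.Iic k, αm j < 0) :
    StrictMono (fun z : ℝ =>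
      ∑ j, αp j * max (z - βp j) 0 + ∑ j, αm j * max (-z + βm j) 0) ∧
    (∑ j, αp j * max ((0:ℝ) - βp j) 0 + ∑ j, αm j * max (-(0:ℝ) + βm j) 0) = 0 := by
  obtain ⟨n, rfl⟩ : ∃ n, d = n + 1 := ⟨d - 1, by omega⟩
  have hβp_nonneg : ∀ j, 0 ≤ βp j := fun j => hβp0 ▸ hβp (Fin.zero_le j)
  have hβm_nonpos : ∀ j, βm j ≤ 0 := fun j => hβm0 ▸ hβm (Fin.zero_le j)
  have hplus_zero : ∀ z ≤ 0, ∑ j, αp j * max (z - βp j) 0 = 0 := fun z hz =>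
    sum_mul_max_eq_zero fun j => by linarith [hβp_nonneg j]
  have hminus_zero : ∀ z ≥ 0, ∑ j, αm j * max (-z + βm j) 0 = 0 := fun z hz =>
    sum_mul_max_eq_zero fun j => by linarith [hβm_nonpos j]
  refine ⟨?_, by rw [hplus_zero 0 le_rfl, hminus_zero 0 le_rfl, add_zero]⟩
  have hleft := strictMonoOn_sum_mul_max_neg_add hβm hαm
  have hright := strictMonoOn_sum_mul_max_sub hβp hαp
  rw [show βm 0 = 0 from hβm0] at hleft
  rw [show βp 0 = 0 from hβp0] at hright
  rw [← strictMonoOn_univ, ← Set.Iic_union_Ici (a := 0)]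
  refine StrictMonoOn.union ?_ ?_ isGreatest_Iic isLeast_Ici
  · exact hleft.congr fun z hz => by simp only [hplus_zero z hz, zero_add]
  · exact hright.congr fun z hz => by simp only [hminus_zero z hz, add_zero]
end

section
/- Under the setting of the previous statement (connected graph, positive scaling c_i, odd sign-preserving φ_l, strictly convex C₀): ĉ E φ(Eᵀ ∇C(r(s))) = 0 (the zero vector in ℝⁿ) if and only if ∇C(r(s)) ∈ span{𝟙_n}. -/
/-!
Write `g` for the vector of marginal costs and `z = Eᵀ g` for its edge differences. Pairing
`E φ(z)` with `g` gives `Σ_l z_l φ_l(z_l)`, a sum of terms that are positive unless `z_l = 0`.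
Hence `E φ(Eᵀ g) = 0` forces `Eᵀ g = 0`, i.e. `g` agrees across every edge, and connectedness
makes `g` constant. Conversely a constant `g` has `Eᵀ g = 0`, and `φ_l(0) = 0` by oddness.
-/

open Matrix

section Incidence

variable {V L : Type*} [DecidableEq V]

def incidenceMatrix (head tail : L → V) : Matrix V L ℝ :=
  fun i l => if i = head l then 1 else if i = tail l then -1 else 0

variable [Fintype V] {head tail : L → V}

theorem incidenceMatrix_transpose_mulVec (hht : ∀ l, head l ≠ tail l) (g : V → ℝ) (l : L) :
    ((incidenceMatrix head tail)ᵀ *ᵥ g) l = g (head l) - g (tail l) := by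
  have hterm : ∀ i, incidenceMatrix head tail i l * g i =
      (if head l = i then g (head l) else 0) + (if tail l = i then -g (tail l) else 0) := by
    intro i
    unfold incidenceMatrix
    by_cases hh : i = head l
    · subst hh; simp [Ne.symm (hht l)]
    · by_cases ht : i = tail l
      · subst ht; simp [hh, Ne.symm hh]
      · simp [hh, ht, Ne.symm hh, Ne.symm ht]
  simp only [mulVec, dotProduct, transpose_apply, hterm, Finset.sum_add_distrib,
    Finset.sum_ite_eq, Finset.mem_univ, if_true]
  ring

theorem incidenceMatrix_transpose_mulVec_eq_zero_iff (hht : ∀ l, head l ≠ tail l)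
    (g : V → ℝ) :
    (incidenceMatrix head tail)ᵀ *ᵥ g = 0 ↔ ∀ l, g (head l) = g (tail l) := by
  simp only [funext_iff, incidenceMatrix_transpose_mulVec hht, Pi.zero_apply, sub_eq_zero]

end Incidence

theorem eq_zero_of_sum_mul_apply_eq_zero {L : Type*} [Fintype L] {φ : L → ℝ → ℝ}
    (hsign : ∀ l (z : ℝ), z ≠ 0 → 0 < z * φ l z) {z : L → ℝ}
    (hsum : ∑ l, z l * φ l (z l) = 0) (l : L) : z l = 0 := by
  have hnonneg : ∀ l ∈ Finset.univ, 0 ≤ z l * φ l (z l) := fun l _ => by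
    by_cases hz : z l = 0
    · simp [hz]
    · exact (hsign l (z l) hz).le
  by_contra hz
  exact (hsign l (z l) hz).ne'
    ((Finset.sum_eq_zero_iff_of_nonneg hnonneg).mp hsum l (Finset.mem_univ l))

theorem mulVec_comp_transpose_mulVec_eq_zero_iff {V L : Type*} [Fintype V] [Fintype L]
    (A : Matrix V L ℝ) {φ : L → ℝ → ℝ} (hφ0 : ∀ l, φ l 0 = 0)
    (hsign : ∀ l (z : ℝ), z ≠ 0 → 0 < z * φ l z) (g : V → ℝ) :
    A *ᵥ (fun l => φ l ((Aᵀ *ᵥ g) l)) = 0 ↔ Aᵀ *ᵥ g = 0 := by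
  constructor
  · intro h
    have hpair : g ⬝ᵥ (A *ᵥ fun l => φ l ((Aᵀ *ᵥ g) l)) =
        ∑ l, (Aᵀ *ᵥ g) l * φ l ((Aᵀ *ᵥ g) l) := by
      rw [dotProduct_mulVec, ← mulVec_transpose]; rfl
    rw [h, dotProduct_zero] at hpair
    exact funext (eq_zero_of_sum_mul_apply_eq_zero hsign hpair.symm)
  · intro h
    rw [h]
    simp only [Pi.zero_apply, hφ0]
    exact mulVec_zero A

theorem forall_eq_of_reflTransGen {V β : Type*} {R : V → V → Prop} {g : V → β}
    (hR : ∀ a b, R a b → g a = g b) {i j : V} (hij : Relation.ReflTransGen R i j) :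
    g i = g j := by
  induction hij with
  | refl => rfl
  | tail _ hstep ih => exact ih.trans (hR _ _ hstep)

theorem forall_edge_eq_iff_exists_eq_const {V L β : Type*} [Nonempty β] {head tail : L → V}
    (hconn : ∀ i j, Relation.ReflTransGen
      (fun a b => ∃ l, (head l = a ∧ tail l = b) ∨ (head l = b ∧ tail l = a)) i j)
    (g : V → β) :
    (∀ l, g (head l) = g (tail l)) ↔ ∃ γ, ∀ i, g i = γ := by
  constructor
  · intro hedge
    rcases isEmpty_or_nonempty V with hV | ⟨⟨i₀⟩⟩
    · exact ⟨Classical.arbitrary β, fun i => isEmptyElim i⟩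
    refine ⟨g i₀, fun i => forall_eq_of_reflTransGen ?_ (hconn i i₀)⟩
    rintro a b ⟨l, ⟨rfl, rfl⟩ | ⟨rfl, rfl⟩⟩
    exacts [hedge l, (hedge l).symm]
  · rintro ⟨γ, hγ⟩ l
    rw [hγ, hγ]

theorem communication_term_zero_iff_identical_marginal_cost_general
    (n m : ℕ) (head tail : Fin m → Fin n) (hht : ∀ l, head l ≠ tail l)
    (hconn : ∀ i j : Fin n, Relation.ReflTransGen
      (fun a b => ∃ l, (head l = a ∧ tail l = b) ∨ (head l = b ∧ tail l = a)) i j)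
    (E : Matrix (Fin n) (Fin m) ℝ)
    (hE : ∀ i l, E i l = if i = head l then 1 else if i = tail l then -1 else 0)
    (c : Fin n → ℝ) (hc : ∀ i, 0 < c i)
    (r : Fin n → ℝ → ℝ)
    (C0 : ℝ → ℝ)
    (φ : Fin m → ℝ → ℝ) (hodd : ∀ l (z : ℝ), φ l (-z) = -φ l z)
    (hsign : ∀ l (z : ℝ), z ≠ 0 → 0 < z * φ l z)
    (s : Fin n → ℝ) :
    (fun i => c i * E.mulVec (fun l =>
        φ l ((Matrix.mulVec Eᵀ fun i => deriv C0 (c i * r i (s i))) l)) i) = 0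
      ↔ ∃ γ : ℝ, ∀ i, deriv C0 (c i * r i (s i)) = γ := by
  obtain rfl : E = incidenceMatrix head tail := Matrix.ext hE
  have hscale : ∀ v : Fin n → ℝ, (fun i => c i * v i) = 0 ↔ v = 0 := fun v => by
    simp [funext_iff, fun i => (hc i).ne']
  rw [hscale, mulVec_comp_transpose_mulVec_eq_zero_iff _
    (fun l => Function.Odd.map_zero (hodd l)) hsign,
    incidenceMatrix_transpose_mulVec_eq_zero_iff hht]
  exact forall_edge_eq_iff_exists_eq_const hconn fun i => deriv C0 (c i * r i (s i))

theorem communication_term_zero_iff_identical_marginal_cost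
    (n m : ℕ) (head tail : Fin m → Fin n) (hht : ∀ l, head l ≠ tail l)
    (hconn : ∀ i j : Fin n, Relation.ReflTransGen
      (fun a b => ∃ l, (head l = a ∧ tail l = b) ∨ (head l = b ∧ tail l = a)) i j)
    (E : Matrix (Fin n) (Fin m) ℝ)
    (hE : ∀ i l, E i l = if i = head l then 1 else if i = tail l then -1 else 0)
    (c : Fin n → ℝ) (hc : ∀ i, 0 < c i)
    (r : Fin n → ℝ → ℝ)
    (C0 : ℝ → ℝ) (hC0 : Differentiable ℝ C0) (hC0m : StrictMono (deriv C0))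
    (φ : Fin m → ℝ → ℝ) (hodd : ∀ l (z : ℝ), φ l (-z) = -φ l z)
    (hsign : ∀ l (z : ℝ), z ≠ 0 → 0 < z * φ l z)
    (s : Fin n → ℝ) :
    (fun i => c i * E.mulVec (fun l =>
        φ l ((Matrix.mulVec Eᵀ fun i => deriv C0 (c i * r i (s i))) l)) i) = 0
      ↔ ∃ γ : ℝ, ∀ i, deriv C0 (c i * r i (s i)) = γ :=
  communication_term_zero_iff_identical_marginal_cost_general n m head tail hht hconn E hE c hc r C0
    φ hodd hsign s
end

section
/- Let E ∈ ℝ^{n×m} be an incidence matrix of a connected graph, and let ψ_l : ℝ → ℝ be strictly increasing for each edge l. If η*, η̂ ∈ range(Eᵀ) satisfy E ψ(η*) = E ψ(η̂) (componentwise application of ψ), then η* = η̂. -/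
/-! `η* - η̂` lies in `range Eᵀ`, which is orthogonal to `ker E ∋ ψ(η*) - ψ(η̂)`. Hence
`∑ₗ (η*ₗ - η̂ₗ) (ψₗ η*ₗ - ψₗ η̂ₗ) = 0`, and by strict monotonicity every term is positive
unless `η*ₗ = η̂ₗ`. -/

open Matrix

theorem StrictMono.sub_mul_sub_pos {R : Type*} [Ring R] [LinearOrder R] [IsStrictOrderedRing R]
    {f : R → R} (hf : StrictMono f) {x y : R} (hxy : x ≠ y) : 0 < (x - y) * (f x - f y) := by
  rcases hxy.lt_or_gt with h | h
  · exact mul_pos_of_neg_of_neg (sub_neg.2 h) (sub_neg.2 (hf h))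
  · exact mul_pos (sub_pos.2 h) (sub_pos.2 (hf h))

theorem StrictMono.sub_mul_sub_nonneg {R : Type*} [Ring R] [LinearOrder R]
    [IsStrictOrderedRing R] {f : R → R} (hf : StrictMono f) (x y : R) :
    0 ≤ (x - y) * (f x - f y) := by
  rcases eq_or_ne x y with rfl | hxy
  · simp
  · exact (hf.sub_mul_sub_pos hxy).le

theorem eq_of_sub_dotProduct_sub_eq_zero {ι R : Type*} [Fintype ι] [Ring R] [LinearOrder R]
    [IsStrictOrderedRing R] {ψ : ι → R → R} (hψ : ∀ i, StrictMono (ψ i)) {x y : ι → R}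
    (h : (x - y) ⬝ᵥ (fun i => ψ i (x i) - ψ i (y i)) = 0) : x = y := by
  by_contra hne
  obtain ⟨i, hi⟩ := Function.ne_iff.mp hne
  have hpos : 0 < (x - y) ⬝ᵥ (fun i => ψ i (x i) - ψ i (y i)) :=
    Finset.sum_pos' (fun j _ => (hψ j).sub_mul_sub_nonneg (x j) (y j))
      ⟨i, Finset.mem_univ i, (hψ i).sub_mul_sub_pos hi⟩
  exact hpos.ne' h

theorem transpose_mulVec_dotProduct_eq_zero {m n R : Type*} [Fintype m] [Fintype n]
    [CommSemiring R] (E : Matrix m n R) (z : m → R) {v : n → R} (hv : E *ᵥ v = 0) :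
    Eᵀ *ᵥ z ⬝ᵥ v = 0 := by
  rw [mulVec_transpose, ← dotProduct_mulVec, hv, dotProduct_zero]

theorem edge_state_uniqueness_general
    (n m : ℕ)
    (E : Matrix (Fin n) (Fin m) ℝ)
    (ψ : Fin m → ℝ → ℝ) (hψ : ∀ l, StrictMono (ψ l))
    (ηstar ηhat : Fin m → ℝ)
    (hstar : ∃ z : Fin n → ℝ, ηstar = Matrix.mulVec Eᵀ z)
    (hhat : ∃ z : Fin n → ℝ, ηhat = Matrix.mulVec Eᵀ z)
    (heq : E.mulVec (fun l => ψ l (ηstar l)) = E.mulVec (fun l => ψ l (ηhat l))) :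
    ηstar = ηhat := by
  obtain ⟨zstar, rfl⟩ := hstar
  obtain ⟨zhat, rfl⟩ := hhat
  apply eq_of_sub_dotProduct_sub_eq_zero hψ
  rw [← mulVec_sub]
  apply transpose_mulVec_dotProduct_eq_zero
  rw [← Pi.sub_def, mulVec_sub, heq, sub_self]

theorem edge_state_uniqueness
    (n m : ℕ) (head tail : Fin m → Fin n) (hht : ∀ l, head l ≠ tail l)
    (hconn : ∀ i j : Fin n, Relation.ReflTransGen
      (fun a b => ∃ l, (head l = a ∧ tail l = b) ∨ (head l = b ∧ tail l = a)) i j)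
    (E : Matrix (Fin n) (Fin m) ℝ)
    (hE : ∀ i l, E i l = if i = head l then 1 else if i = tail l then -1 else 0)
    (ψ : Fin m → ℝ → ℝ) (hψ : ∀ l, StrictMono (ψ l))
    (ηstar ηhat : Fin m → ℝ)
    (hstar : ∃ z : Fin n → ℝ, ηstar = Matrix.mulVec Eᵀ z)
    (hhat : ∃ z : Fin n → ℝ, ηhat = Matrix.mulVec Eᵀ z)
    (heq : E.mulVec (fun l => ψ l (ηstar l)) = E.mulVec (fun l => ψ l (ηhat l))) :
    ηstar = ηhat :=
  edge_state_uniqueness_general n m E ψ hψ ηstar ηhat hstar hhat heq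
end
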